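/- (Orlicz width Minkowski inequality) Let K, L ∈ 𝒦ⁿ, let i be an integer with 0 ≤ i < n, and let φ ∈ Φ. Then A_{φ,i}(K,L) ≥ A_i(K) · φ((A_i(L)/A_i(K))^{1/(n−i)}). If φ is strictly convex, equality holds if and only if K and L have similar width. -/

import Mathlib

open MeasureTheory Metric Filter Set
open scoped RealInnerProductSpace ENNReal

noncomputable section

abbrev Euc (n : ℕ) := EuclideanSpace ℝ (Fin n)

/-- Support function `h(K,x) = sup {⟨x,y⟩ : y ∈ K}`. -/
def suppFn {n : ℕ} (K : Set (Euc n)) (x : Euc n) : ℝ :=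
  sSup ((fun y => ⟪x, y⟫) '' K)

/-- Half width of `K` in direction `u`: `b(K,u) = (h(K,u)+h(K,-u))/2`. -/
def halfWidth {n : ℕ} (K : Set (Euc n)) (u : Euc n) : ℝ :=
  (suppFn K u + suppFn K (-u)) / 2

/-- A convex body containing the origin in its interior. -/
def IsConvexBody {n : ℕ} (K : Set (Euc n)) : Prop :=
  IsCompact K ∧ Convex ℝ K ∧ (0 : Euc n) ∈ interior K

/-- Spherical Lebesgue measure on the unit sphere. -/
def sphMeasure (n : ℕ) : Measure (sphere (0 : Euc n) 1) :=
  (volume : Measure (Euc n)).toSphere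

/-- Width integral `A_i(K) = (1/n) ∫_{S^{n-1}} b(K,u)^{n-i} dS(u)`. -/
def widthIntegral (n i : ℕ) (K : Set (Euc n)) : ℝ :=
  (1 / (n : ℝ)) * ∫ u : sphere (0 : Euc n) 1,
    halfWidth K (u : Euc n) ^ ((n : ℝ) - i) ∂(sphMeasure n)

/-- `K` and `L` have similar width: `b(L,·) = λ b(K,·)` on the sphere for some `λ > 0`. -/
def SimilarWidth {n : ℕ} (K L : Set (Euc n)) : Prop :=
  ∃ lam : ℝ, 0 < lam ∧ ∀ u : Euc n, ‖u‖ = 1 → halfWidth L u = lam * halfWidth K u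

/-- The class `Φ`: convex, strictly decreasing `φ : (0,∞) → (0,∞)` with
`φ(0⁺)=∞`, `φ(∞)=0`, `φ(1)=1`. -/
structure IsOrliczPhi (φ : ℝ → ℝ) : Prop where
  convexOn : ConvexOn ℝ (Set.Ioi (0 : ℝ)) φ
  strictAntiOn : StrictAntiOn φ (Set.Ioi (0 : ℝ))
  pos : ∀ t : ℝ, 0 < t → 0 < φ t
  tendsto_zero : Filter.Tendsto φ (nhdsWithin 0 (Set.Ioi 0)) Filter.atTop
  tendsto_atTop : Filter.Tendsto φ Filter.atTop (nhds 0)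
  one : φ 1 = 1

/-- Orlicz mixed width integral
`A_{φ,i}(K,L) = (1/n) ∫ φ(b(L,u)/b(K,u)) b(K,u)^{n-i} dS(u)`. -/
def orliczMixedWidthIntegral (n i : ℕ) (φ : ℝ → ℝ) (K L : Set (Euc n)) : ℝ :=
  (1 / (n : ℝ)) * ∫ u : sphere (0 : Euc n) 1,
    φ (halfWidth L (u : Euc n) / halfWidth K (u : Euc n)) *
      halfWidth K (u : Euc n) ^ ((n : ℝ) - i) ∂(sphMeasure n)

/-! ### Auxiliary lemmas -/

variable {n : ℕ}

lemma bddAbove_inner_image {K : Set (Euc n)} (hK : IsCompact K) (x : Euc n) :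
    BddAbove ((fun y => ⟪x, y⟫) '' K) :=
  (hK.image (continuous_const.inner continuous_id)).bddAbove

lemma suppFn_le_of_bound {K : Set (Euc n)} (hne : K.Nonempty) {R : ℝ}
    (hR : ∀ y ∈ K, ‖y‖ ≤ R) (x : Euc n) : suppFn K x ≤ R * ‖x‖ := by
  apply csSup_le (hne.image _)
  rintro t ⟨y, hy, rfl⟩
  calc ⟪x, y⟫ ≤ ‖x‖ * ‖y‖ := real_inner_le_norm x y
  _ ≤ ‖x‖ * R := by
      have := hR y hy
      nlinarith [norm_nonneg x]
  _ = R * ‖x‖ := mul_comm _ _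

lemma le_suppFn {K : Set (Euc n)} (hK : IsCompact K) {y : Euc n} (hy : y ∈ K) (x : Euc n) :
    ⟪x, y⟫ ≤ suppFn K x :=
  le_csSup (bddAbove_inner_image hK x) ⟨y, hy, rfl⟩

lemma suppFn_sub_le {K : Set (Euc n)} (hK : IsCompact K) (hne : K.Nonempty) {R : ℝ}
    (hR : ∀ y ∈ K, ‖y‖ ≤ R) (x x' : Euc n) :
    suppFn K x ≤ suppFn K x' + R * ‖x - x'‖ := by
  apply csSup_le (hne.image _)
  rintro t ⟨y, hy, rfl⟩
  have h1 : ⟪x, y⟫ = ⟪x', y⟫ + ⟪x - x', y⟫ := by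
    rw [inner_sub_left]; ring
  have h2 : ⟪x - x', y⟫ ≤ ‖x - x'‖ * ‖y‖ := real_inner_le_norm _ _
  have h3 := le_suppFn hK hy x'
  have h4 := hR y hy
  have h5 : (0:ℝ) ≤ ‖x - x'‖ := norm_nonneg _
  nlinarith

lemma continuous_suppFn {K : Set (Euc n)} (hK : IsCompact K) (hne : K.Nonempty) :
    Continuous (suppFn K) := by
  obtain ⟨R, hR0, hR⟩ : ∃ R, 0 ≤ R ∧ ∀ y ∈ K, ‖y‖ ≤ R := by
    obtain ⟨R, hR⟩ := hK.isBounded.exists_norm_le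
    exact ⟨max R 0, le_max_right _ _, fun y hy => (hR y hy).trans (le_max_left _ _)⟩
  have : LipschitzWith (Real.toNNReal R) (suppFn K) := by
    apply LipschitzWith.of_dist_le_mul
    intro x x'
    rw [Real.dist_eq, abs_sub_le_iff]
    constructor
    · have := suppFn_sub_le hK hne hR x x'
      have : suppFn K x - suppFn K x' ≤ R * ‖x - x'‖ := by linarith
      simpa [Real.coe_toNNReal R hR0, dist_eq_norm] using this
    · have := suppFn_sub_le hK hne hR x' x
      have h2 : suppFn K x' - suppFn K x ≤ R * ‖x' - x‖ := by linarith
      calc suppFn K x' - suppFn K x ≤ R * ‖x' - x‖ := h2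
      _ = (Real.toNNReal R) * dist x x' := by
          rw [Real.coe_toNNReal R hR0, dist_eq_norm, norm_sub_rev]
  exact this.continuous

lemma continuous_halfWidth {K : Set (Euc n)} (hK : IsCompact K) (hne : K.Nonempty) :
    Continuous (halfWidth K) := by
  have h := continuous_suppFn hK hne
  exact ((h.add (h.comp continuous_neg)).div_const 2)

lemma halfWidth_pos {K : Set (Euc n)} (hK : IsConvexBody K) {u : Euc n} (hu : ‖u‖ = 1) :
    0 < halfWidth K u := by
  obtain ⟨hc, -, h0⟩ := hK
  obtain ⟨ε, hε, hball⟩ := Metric.mem_nhds_iff.1 (mem_interior_iff_mem_nhds.1 h0)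
  have key : ∀ v : Euc n, ‖v‖ = 1 → ε / 2 ≤ suppFn K v := by
    intro v hv
    have hmem : (ε/2) • v ∈ K := by
      apply hball
      rw [mem_ball, dist_eq_norm, sub_zero, norm_smul, hv, mul_one,
        Real.norm_eq_abs, abs_of_pos (half_pos hε)]
      linarith
    have := le_suppFn hc hmem v
    rw [real_inner_smul_right, real_inner_self_eq_norm_sq, hv] at this
    nlinarith
  have h1 := key u hu
  have h2 := key (-u) (by simp [hu])
  unfold halfWidth
  linarith

instance : IsFiniteMeasure (sphMeasure n) := by
  unfold sphMeasure; infer_instance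

lemma sphMeasure_open_pos (hn : 1 ≤ n) {s : Set (sphere (0 : Euc n) 1)}
    (ho : IsOpen s) (hs : s.Nonempty) : 0 < sphMeasure n s := by
  have hmeas : MeasurableSet s := ho.measurableSet
  rw [sphMeasure, Measure.toSphere_apply' _ hmeas,
    ← Measure.toSphere_apply_aux volume s ⟨1, Set.mem_Ioi.2 one_pos⟩]
  set H := homeomorphUnitSphereProd (Euc n) with hH
  have hIio : (Iio (⟨1, Set.mem_Ioi.2 one_pos⟩ : Ioi (0:ℝ))) = Subtype.val ⁻¹' Iio (1:ℝ) := rfl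
  have hopen : IsOpen ((Subtype.val : ({(0:Euc n)}ᶜ : Set (Euc n)) → Euc n) ''
      (H ⁻¹' (s ×ˢ Iio ⟨1, Set.mem_Ioi.2 one_pos⟩))) := by
    apply (isOpen_compl_singleton).isOpenMap_subtype_val
    apply H.continuous.isOpen_preimage
    rw [hIio]
    exact ho.prod (continuous_subtype_val.isOpen_preimage _ isOpen_Iio)
  obtain ⟨u, hu⟩ := hs
  have hmem : ((H.symm (u, ⟨1/2, Set.mem_Ioi.2 (half_pos one_pos)⟩) :
      ({(0:Euc n)}ᶜ : Set (Euc n))) : Euc n) ∈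
      (Subtype.val : ({(0:Euc n)}ᶜ : Set (Euc n)) → Euc n) ''
      (H ⁻¹' (s ×ˢ Iio ⟨1, Set.mem_Ioi.2 one_pos⟩)) := by
    refine ⟨_, ?_, rfl⟩
    rw [Set.mem_preimage, Homeomorph.apply_symm_apply]
    refine ⟨hu, ?_⟩
    rw [Set.mem_Iio, Subtype.mk_lt_mk]
    norm_num
  have hpos := hopen.measure_pos volume ⟨_, hmem⟩
  have hdim : (0:ℝ≥0∞) < (Module.finrank ℝ (Euc n) : ℝ≥0∞) := by
    rw [finrank_euclideanSpace_fin]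
    exact_mod_cast Nat.pos_of_ne_zero (by omega)
  exact ENNReal.mul_pos hdim.ne' hpos.ne'

lemma sphere_nonempty_of (hn : 1 ≤ n) : Nonempty (sphere (0 : Euc n) 1) := by
  refine ⟨⟨EuclideanSpace.single (⟨0, by omega⟩ : Fin n) (1:ℝ), ?_⟩⟩
  simp [mem_sphere_iff_norm, EuclideanSpace.norm_single]

lemma sphMeasure_univ_pos (hn : 1 ≤ n) :
    0 < sphMeasure n (univ : Set (sphere (0 : Euc n) 1)) := by
  obtain ⟨u⟩ := sphere_nonempty_of (n := n) hn
  exact sphMeasure_open_pos hn isOpen_univ ⟨u, trivial⟩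

lemma eq_of_ae_eq_sph (hn : 1 ≤ n) {f g : sphere (0 : Euc n) 1 → ℝ}
    (hf : Continuous f) (hg : Continuous g) (h : f =ᵐ[sphMeasure n] g) : ∀ x, f x = g x := by
  by_contra hne
  push_neg at hne
  obtain ⟨x, hx⟩ := hne
  have ho : IsOpen {y | f y ≠ g y} := isOpen_ne_fun hf hg
  have hpos := sphMeasure_open_pos hn ho ⟨x, hx⟩
  rw [Filter.EventuallyEq, ae_iff] at h
  simp only [ne_eq] at h hpos
  rw [h] at hpos
  exact lt_irrefl _ hpos

set_option maxHeartbeats 2000000 in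
/-- Orlicz width Minkowski inequality:
`A_{φ,i}(K,L) ≥ A_i(K) · φ((A_i(L)/A_i(K))^{1/(n-i)})`, with equality (for
strictly convex `φ`) iff `K` and `L` have similar width. -/
theorem orlicz_width_minkowski {n : ℕ} (hn : 2 ≤ n) (i : ℕ) (hi : i < n)
    (φ : ℝ → ℝ) (hφ : IsOrliczPhi φ)
    (K L : Set (Euc n)) (hK : IsConvexBody K) (hL : IsConvexBody L) :
    orliczMixedWidthIntegral n i φ K L ≥
      widthIntegral n i K *
        φ ((widthIntegral n i L / widthIntegral n i K) ^ (1 / ((n : ℝ) - i))) ∧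
    (StrictConvexOn ℝ (Set.Ioi (0 : ℝ)) φ →
      (orliczMixedWidthIntegral n i φ K L =
          widthIntegral n i K *
            φ ((widthIntegral n i L / widthIntegral n i K) ^ (1 / ((n : ℝ) - i))) ↔
        SimilarWidth K L)) := by
  have hn1 : 1 ≤ n := by omega
  haveI := sphere_nonempty_of (n := n) hn1
  set p : ℝ := (n : ℝ) - i with hp
  have hp0 : 0 < p := by
    have : (i:ℝ) < n := by exact_mod_cast hi
    simp only [hp]; linarith
  have hp1 : 1 ≤ p := by
    have : (i:ℝ) + 1 ≤ n := by exact_mod_cast hi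
    simp only [hp]; linarith
  -- bodies: nonempty, continuity, positivity
  have hKne : K.Nonempty := ⟨0, interior_subset hK.2.2⟩
  have hLne : L.Nonempty := ⟨0, interior_subset hL.2.2⟩
  set S := sphMeasure n with hS
  set bK : sphere (0 : Euc n) 1 → ℝ := fun u => halfWidth K (u : Euc n) with hbK
  set bL : sphere (0 : Euc n) 1 → ℝ := fun u => halfWidth L (u : Euc n) with hbL
  have hbKc : Continuous bK := (continuous_halfWidth hK.1 hKne).comp continuous_subtype_val
  have hbLc : Continuous bL := (continuous_halfWidth hL.1 hLne).comp continuous_subtype_val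
  have hbK_pos : ∀ u, 0 < bK u := fun u =>
    halfWidth_pos hK (mem_sphere_zero_iff_norm.1 u.2)
  have hbL_pos : ∀ u, 0 < bL u := fun u =>
    halfWidth_pos hL (mem_sphere_zero_iff_norm.1 u.2)
  have exists_min : ∀ g : sphere (0 : Euc n) 1 → ℝ, Continuous g →
      ∃ x, ∀ y, g x ≤ g y := by
    intro g hg
    obtain ⟨x, -, hx⟩ := isCompact_univ.exists_isMinOn univ_nonempty hg.continuousOn
    exact ⟨x, fun y => isMinOn_iff.mp hx y (mem_univ y)⟩
  have exists_max : ∀ g : sphere (0 : Euc n) 1 → ℝ, Continuous g →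
      ∃ x, ∀ y, g y ≤ g x := by
    intro g hg
    obtain ⟨x, -, hx⟩ := isCompact_univ.exists_isMaxOn univ_nonempty hg.continuousOn
    exact ⟨x, fun y => isMaxOn_iff.mp hx y (mem_univ y)⟩
  -- min/max
  obtain ⟨uK, hminK⟩ := exists_min _ hbKc
  obtain ⟨uK', hmaxK⟩ := exists_max _ hbKc
  obtain ⟨uL, hminL⟩ := exists_min _ hbLc
  obtain ⟨uL', hmaxL⟩ := exists_max _ hbLc
  set cK := bK uK with hcK; set CK := bK uK' with hCK
  set cL := bL uL with hcL; set CL := bL uL' with hCL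
  have hcK_pos : 0 < cK := hbK_pos uK
  have hCK_pos : 0 < CK := hbK_pos uK'
  have hcL_pos : 0 < cL := hbL_pos uL
  have hCL_pos : 0 < CL := hbL_pos uL'
  -- weights
  set wK : sphere (0 : Euc n) 1 → ℝ := fun u => bK u ^ p with hwK
  set wL : sphere (0 : Euc n) 1 → ℝ := fun u => bL u ^ p with hwL
  have hwKc : Continuous wK := hbKc.rpow_const (fun u => Or.inr hp0.le)
  have hwLc : Continuous wL := hbLc.rpow_const (fun u => Or.inr hp0.le)
  have hwK_pos : ∀ u, 0 < wK u := fun u => Real.rpow_pos_of_pos (hbK_pos u) _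
  have hwL_pos : ∀ u, 0 < wL u := fun u => Real.rpow_pos_of_pos (hbL_pos u) _
  -- generic integrability
  have cont_int : ∀ (μ : Measure (sphere (0 : Euc n) 1)) [IsFiniteMeasure μ]
      (g : sphere (0 : Euc n) 1 → ℝ), Continuous g → Integrable g μ := by
    intro μ _ g hg
    obtain ⟨u₀, hu₀⟩ := exists_max _ (continuous_norm.comp hg)
    exact memLp_one_iff_integrable.mp
      (MemLp.of_bound hg.aestronglyMeasurable _ (ae_of_all _ hu₀))
  have cont_mem : ∀ (e : ℝ≥0∞) (g : sphere (0 : Euc n) 1 → ℝ),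
      Continuous g → MemLp g e S := by
    intro e g hg
    obtain ⟨u₀, hu₀⟩ := exists_max _ (continuous_norm.comp hg)
    exact MemLp.of_bound hg.aestronglyMeasurable _ (ae_of_all _ hu₀)
  have hSuniv_pos : 0 < S univ := sphMeasure_univ_pos hn1
  have hSuniv_ne : S univ ≠ ∞ := measure_ne_top _ _
  set IK := ∫ u, wK u ∂S with hIK
  set IL := ∫ u, wL u ∂S with hIL
  have int_pos : ∀ (w : sphere (0 : Euc n) 1 → ℝ), Continuous w →
      (∀ u, (0:ℝ) < w u) → (∃ c, 0 < c ∧ ∀ u, c ≤ w u) → 0 < ∫ u, w u ∂S := by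
    rintro w hwc hwp ⟨c, hc, hcw⟩
    calc (0:ℝ) < (S univ).toReal * c :=
          mul_pos (ENNReal.toReal_pos hSuniv_pos.ne' hSuniv_ne) hc
    _ = ∫ _, c ∂S := by rw [integral_const, smul_eq_mul, measureReal_def]
    _ ≤ ∫ u, w u ∂S := integral_mono (integrable_const _) (cont_int S w hwc) hcw
  have hIK_pos : 0 < IK := int_pos wK hwKc hwK_pos
    ⟨cK ^ p, Real.rpow_pos_of_pos hcK_pos _,
      fun u => Real.rpow_le_rpow hcK_pos.le (hminK u) hp0.le⟩
  have hIL_pos : 0 < IL := int_pos wL hwLc hwL_pos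
    ⟨cL ^ p, Real.rpow_pos_of_pos hcL_pos _,
      fun u => Real.rpow_le_rpow hcL_pos.le (hminL u) hp0.le⟩
  -- weighted measure
  set dens : sphere (0 : Euc n) 1 → NNReal := fun u => (wK u).toNNReal with hdens
  have hdens_meas : Measurable dens := hwKc.measurable.real_toNNReal
  set μ' : Measure (sphere (0 : Euc n) 1) :=
    S.withDensity (fun u => (dens u : ℝ≥0∞)) with hμ'
  have hInt : ∀ g : sphere (0 : Euc n) 1 → ℝ,
      ∫ u, g u ∂μ' = ∫ u, g u * wK u ∂S := by
    intro g
    rw [hμ', integral_withDensity_eq_integral_smul hdens_meas g]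
    congr 1; ext u
    rw [NNReal.smul_def, Real.coe_toNNReal _ (hwK_pos u).le, smul_eq_mul, mul_comm]
  have hμ'univ_eq : μ' univ = ∫⁻ u, ENNReal.ofReal (wK u) ∂S := by
    rw [hμ', withDensity_apply _ MeasurableSet.univ, Measure.restrict_univ]
    rfl
  have hμ'univ : (μ' univ).toReal = IK := by
    rw [hμ'univ_eq, hIK,
      integral_eq_lintegral_of_nonneg_ae (ae_of_all _ fun u => (hwK_pos u).le)
        hwKc.aestronglyMeasurable]
  haveI : IsFiniteMeasure μ' := by
    refine ⟨?_⟩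
    rw [hμ'univ_eq]
    calc ∫⁻ u, ENNReal.ofReal (wK u) ∂S ≤ ∫⁻ _, ENNReal.ofReal (CK ^ p) ∂S :=
          lintegral_mono fun u => ENNReal.ofReal_le_ofReal
            (Real.rpow_le_rpow (hbK_pos u).le (hmaxK u) hp0.le)
    _ = ENNReal.ofReal (CK ^ p) * S univ := lintegral_const _
    _ < ∞ := ENNReal.mul_lt_top ENNReal.ofReal_lt_top hSuniv_ne.lt_top
  have hμ'_ne_zero : μ' univ ≠ 0 := by
    intro h
    rw [h, ENNReal.toReal_zero] at hμ'univ
    exact hIK_pos.ne hμ'univ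
  haveI : NeZero μ' := ⟨Measure.measure_univ_ne_zero.mp hμ'_ne_zero⟩
  -- the ratio function
  set f : sphere (0 : Euc n) 1 → ℝ := fun u => bL u / bK u with hf
  have hf_cont : Continuous f := hbLc.div hbKc fun u => (hbK_pos u).ne'
  set a := cL / CK with ha_def
  set b := CL / cK with hb_def
  have ha : 0 < a := div_pos hcL_pos hCK_pos
  have hmem : ∀ u, f u ∈ Icc a b := by
    intro u
    constructor
    · exact div_le_div₀ (hbL_pos u).le (hminL u) (hbK_pos u) (hmaxK u)
    · exact div_le_div₀ hCL_pos.le (hmaxL u) hcK_pos (hminK u)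
  have hIcc_sub : Icc a b ⊆ Ioi (0:ℝ) := fun x hx => lt_of_lt_of_le ha hx.1
  have hconv : ConvexOn ℝ (Icc a b) φ := hφ.convexOn.subset hIcc_sub (convex_Icc a b)
  have hφconts : ContinuousOn φ (Icc a b) :=
    (hφ.convexOn.continuousOn isOpen_Ioi).mono hIcc_sub
  have hfs : ∀ᵐ u ∂μ', f u ∈ Icc a b := ae_of_all _ hmem
  have hfi : Integrable f μ' := cont_int μ' f hf_cont
  have hφf_cont : Continuous (φ ∘ f) := hφconts.comp_continuous hf_cont hmem
  have hgi : Integrable (φ ∘ f) μ' := cont_int μ' _ hφf_cont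
  have hJensen : φ (⨍ u, f u ∂μ') ≤ ⨍ u, φ (f u) ∂μ' :=
    hconv.map_average_le hφconts isClosed_Icc hfs hfi hgi
  have havg_mem : (⨍ u, f u ∂μ') ∈ Icc a b :=
    (hconv.average_mem_epigraph hφconts isClosed_Icc hfs hfi hgi).1
  have havg_pos : 0 < ⨍ u, f u ∂μ' := lt_of_lt_of_le ha havg_mem.1
  -- averages vs integrals
  set J := ∫ u, f u * wK u ∂S with hJ
  have havg : ⨍ u, f u ∂μ' = J / IK := by
    rw [average_eq, measureReal_def, hμ'univ, hInt f, smul_eq_mul, div_eq_inv_mul]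
  have havgφ : ∫ u, φ (f u) * wK u ∂S = IK * ⨍ u, φ (f u) ∂μ' := by
    rw [average_eq, measureReal_def, hμ'univ, hInt (fun u => φ (f u)), smul_eq_mul, ← mul_assoc,
      mul_inv_cancel₀ hIK_pos.ne', one_mul]
  -- Hölder step
  have hHolder : J / IK ≤ (IL / IK) ^ (1 / p) := by
    rcases eq_or_lt_of_le hp1 with hpe | hplt
    · have hJeq : J = IL := by
        rw [hJ, hIL]
        apply integral_congr_ae
        apply ae_of_all
        intro u
        simp only [hf, hwK, hwL, ← hpe, Real.rpow_one]
        rw [div_mul_cancel₀ _ (hbK_pos u).ne']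
      rw [hJeq, ← hpe]
      norm_num
    · set q := Real.conjExponent p with hq
      have hpq : p.HolderConjugate q := Real.HolderConjugate.conjExponent hplt
      have hq_pos : 0 < q := hpq.symm.pos
      set G : sphere (0 : Euc n) 1 → ℝ := fun u => bK u ^ (p - 1) with hG
      have hGc : Continuous G := hbKc.rpow_const (fun u => Or.inr (by linarith))
      have hJ_FG : J = ∫ u, bL u * G u ∂S := by
        rw [hJ]
        apply integral_congr_ae
        apply ae_of_all
        intro u
        simp only [hf, hwK, hG]
        have hsplit : bK u ^ p = bK u * bK u ^ (p - 1) := by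
          rw [show p = 1 + (p - 1) by ring, Real.rpow_add (hbK_pos u), Real.rpow_one]
          ring_nf
        rw [hsplit]
        have hne := (hbK_pos u).ne'
        field_simp
      have hGq : ∫ u, G u ^ q ∂S = IK := by
        rw [hIK]
        apply integral_congr_ae
        apply ae_of_all
        intro u
        simp only [hG, hwK]
        rw [← Real.rpow_mul (hbK_pos u).le]
        congr 1
        have hne : p - 1 ≠ 0 := by linarith
        rw [hq, Real.conjExponent]
        field_simp
      have hHold := integral_mul_le_Lp_mul_Lq_of_nonneg (μ := S) hpq
        (ae_of_all _ fun u => (hbL_pos u).le)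
        (ae_of_all _ fun u => (Real.rpow_pos_of_pos (hbK_pos u) _).le)
        (cont_mem _ _ hbLc) (cont_mem _ _ hGc)
      have hLp : (∫ u, bL u ^ p ∂S) = IL := hIL.symm
      rw [hLp, hGq] at hHold
      have hstep : (IL ^ (1/p) * IK ^ (1/q)) / IK = (IL/IK) ^ (1/p) := by
        rw [Real.div_rpow hIL_pos.le hIK_pos.le,
          div_eq_div_iff hIK_pos.ne' (Real.rpow_pos_of_pos hIK_pos (1/p)).ne',
          mul_assoc, ← Real.rpow_add hIK_pos,
          show 1/q + 1/p = 1 by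
            rw [one_div, one_div, add_comm]; exact hpq.inv_add_inv_eq_one,
          Real.rpow_one]
      rw [hJ_FG]
      calc (∫ u, bL u * G u ∂S) / IK ≤ (IL ^ (1/p) * IK ^ (1/q)) / IK := by
            rw [div_eq_mul_inv, div_eq_mul_inv]
            exact mul_le_mul_of_nonneg_right hHold (inv_nonneg.2 hIK_pos.le)
      _ = (IL/IK)^(1/p) := hstep
  -- conclusion setup
  set r := (IL / IK) ^ (1 / p) with hr
  have hr_pos : 0 < r := Real.rpow_pos_of_pos (div_pos hIL_pos hIK_pos) _
  have havg_le_r : ⨍ u, f u ∂μ' ≤ r := by rw [havg]; exact hHolder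
  have hφr_le : φ r ≤ φ (⨍ u, f u ∂μ') := by
    rcases eq_or_lt_of_le havg_le_r with h | h
    · rw [h]
    · exact (hφ.strictAntiOn (mem_Ioi.2 havg_pos) (mem_Ioi.2 hr_pos) h).le
  have hwidthK : widthIntegral n i K = (1 / (n:ℝ)) * IK := rfl
  have hwidthL : widthIntegral n i L = (1 / (n:ℝ)) * IL := rfl
  have horlicz : orliczMixedWidthIntegral n i φ K L =
      (1/(n:ℝ)) * (IK * ⨍ u, φ (f u) ∂μ') := by
    rw [← havgφ]; rfl
  have hn0 : (0:ℝ) < 1/(n:ℝ) := by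
    have : (0:ℝ) < n := by exact_mod_cast (by omega : 0 < n)
    positivity
  have hratio : widthIntegral n i L / widthIntegral n i K = IL / IK := by
    rw [hwidthK, hwidthL, mul_div_mul_left _ _ (ne_of_gt hn0)]
  have hrhs : widthIntegral n i K *
      φ ((widthIntegral n i L / widthIntegral n i K) ^ (1 / p)) =
      (1/(n:ℝ)) * (IK * φ r) := by
    rw [hratio, hwidthK, hr, mul_assoc]
  have hmain : orliczMixedWidthIntegral n i φ K L ≥
      widthIntegral n i K *
        φ ((widthIntegral n i L / widthIntegral n i K) ^ (1 / p)) := by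
    rw [horlicz, hrhs]
    have h1 : φ r ≤ ⨍ u, φ (f u) ∂μ' := le_trans hφr_le hJensen
    have h2 : IK * φ r ≤ IK * ⨍ u, φ (f u) ∂μ' :=
      mul_le_mul_of_nonneg_left h1 hIK_pos.le
    exact mul_le_mul_of_nonneg_left h2 hn0.le
  refine ⟨hmain, ?_⟩
  intro hstrict
  constructor
  · intro heq
    have heq2 : ⨍ u, φ (f u) ∂μ' = φ r := by
      rw [horlicz, hrhs] at heq
      exact mul_left_cancel₀ hIK_pos.ne' (mul_left_cancel₀ (ne_of_gt hn0) heq)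
    have hJeq : φ (⨍ u, f u ∂μ') = ⨍ u, φ (f u) ∂μ' :=
      le_antisymm hJensen (by rw [heq2]; exact hφr_le)
    have hsc : StrictConvexOn ℝ (Icc a b) φ := hstrict.subset hIcc_sub (convex_Icc a b)
    rcases hsc.ae_eq_const_or_map_average_lt hφconts isClosed_Icc hfs hfi hgi with hae | hlt
    · set c := ⨍ u, f u ∂μ' with hc
      have hae' : ∀ᵐ u ∂μ', f u = c := hae
      have haeS : ∀ᵐ u ∂S, f u = c := by
        have h1 := (ae_withDensity_iff (p := fun u => f u = c)
          hdens_meas.coe_nnreal_ennreal).1 hae'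
        refine h1.mono fun u hu => hu ?_
        simp only [ne_eq, ENNReal.coe_eq_zero]
        exact (Real.toNNReal_pos.2 (hwK_pos u)).ne'
      have hall := eq_of_ae_eq_sph hn1 hf_cont continuous_const haeS
      refine ⟨c, havg_pos, ?_⟩
      intro u hu
      have hKu : halfWidth K u ≠ 0 := (halfWidth_pos hK hu).ne'
      have h3 := hall ⟨u, mem_sphere_zero_iff_norm.2 hu⟩
      simp only [hf] at h3
      have h4 : halfWidth L u / halfWidth K u = c := h3
      rw [div_eq_iff hKu] at h4
      exact h4
    · exfalso; rw [hJeq] at hlt; exact lt_irrefl _ hlt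
  · rintro ⟨lam, hlam, hsim⟩
    have hsimS : ∀ u : sphere (0:Euc n) 1, bL u = lam * bK u :=
      fun u => hsim _ (mem_sphere_zero_iff_norm.1 u.2)
    have hILlam : IL = lam ^ p * IK := by
      rw [hIL, hIK]
      calc ∫ u, wL u ∂S = ∫ u, lam ^ p * wK u ∂S := by
            apply integral_congr_ae; apply ae_of_all; intro u
            simp only [hwL, hwK]
            rw [hsimS u, Real.mul_rpow hlam.le (hbK_pos u).le]
      _ = lam ^ p * ∫ u, wK u ∂S := by rw [integral_const_mul]
    have hratio2 : widthIntegral n i L / widthIntegral n i K = lam ^ p := by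
      rw [hratio, hILlam, mul_div_assoc, div_self hIK_pos.ne', mul_one]
    have hlampow : (lam ^ p) ^ (1/p) = lam := by
      rw [← Real.rpow_mul hlam.le, mul_one_div, div_self hp0.ne', Real.rpow_one]
    have hLHS : orliczMixedWidthIntegral n i φ K L = widthIntegral n i K * φ lam := by
      have he1 : orliczMixedWidthIntegral n i φ K L =
          (1/(n:ℝ)) * ∫ u, φ (f u) * wK u ∂S := rfl
      rw [he1]
      have he2 : ∫ u, φ (f u) * wK u ∂S = ∫ u, φ lam * wK u ∂S := by
        apply integral_congr_ae; apply ae_of_all; intro u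
        congr 2
        simp only [hf]
        rw [hsimS u, mul_div_assoc, div_self (hbK_pos u).ne', mul_one]
      rw [he2, integral_const_mul, hwidthK]
      ring
    rw [hLHS, hratio2, hlampow]

end
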